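/- arXiv:1312.6427 — 5 statements merged into one kernel-verified Lean document; each statement's English description precedes it below -/
import Mathlib

section
/- Let F, G, H : E → ℝ be smooth (C^∞) functions. Then (i) the Poisson bracket {F, G} is a smooth function E → ℝ; (ii) the bracket is antisymmetric: {F, G}(x) = -{G, F}(x) for all x ∈ E; and (iii) the Jacobi identity holds: {{F, G}, H}(x) + {{G, H}, F}(x) + {{H, F}, G}(x) = 0 for all x ∈ E. (This is the Hilbert-space form of the paper's Proposition that the bracket {F,G} = ∫ (δf/δz^A) σ^{AB} (δg/δz^B) d^n x, for a constant antisymmetric matrix σ^{AB}, defines a Poisson bracket on differentiable functionals.) -/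
open RealInnerProductSpace

/-- The Poisson bracket of two functionals on a real Hilbert space `E`,
for a skew-adjoint continuous linear map `σ`:
`{F, G}(x) = ⟪gradient F x, σ (gradient G x)⟫`. -/
noncomputable def poissonBracket {E : Type*} [NormedAddCommGroup E]
    [InnerProductSpace ℝ E] [CompleteSpace E]
    (σ : E →L[ℝ] E) (F G : E → ℝ) : E → ℝ :=
  fun x => ⟪gradient F x, σ (gradient G x)⟫

section Aux

variable {E : Type*} [NormedAddCommGroup E] [InnerProductSpace ℝ E] [CompleteSpace E]

/-- `(toDual ℝ E).symm` as a genuine `ℝ`-continuous linear map. -/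
noncomputable def dualSymmCLM (E : Type*) [NormedAddCommGroup E] [InnerProductSpace ℝ E]
    [CompleteSpace E] : (E →L[ℝ] ℝ) →L[ℝ] E :=
  LinearMap.mkContinuous
    { toFun := fun y => (InnerProductSpace.toDual ℝ E).symm y
      map_add' := fun y z => by simp
      map_smul' := fun c y => by simp }
    1 (fun y => by simp)

lemma gradient_eq_dualSymm (F : E → ℝ) :
    gradient F = fun x => dualSymmCLM E (fderiv ℝ F x) := rfl

lemma grad_contDiff {F : E → ℝ} (hF : ContDiff ℝ (⊤ : ℕ∞) F) : ContDiff ℝ (⊤ : ℕ∞) (gradient F) := by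
  rw [gradient_eq_dualSymm]
  exact (dualSymmCLM E).contDiff.comp (hF.fderiv_right (by simp))

lemma hasFDerivAt_grad {F : E → ℝ} (hF : ContDiff ℝ (⊤ : ℕ∞) F) (x : E) :
    HasFDerivAt (gradient F)
      ((dualSymmCLM E).comp (fderiv ℝ (fderiv ℝ F) x)) x := by
  rw [gradient_eq_dualSymm]
  exact (dualSymmCLM E).hasFDerivAt.comp x
    ((hF.fderiv_right (m := 1) ((WithTop.coe_le_coe.mpr le_top))).differentiable one_ne_zero x).hasFDerivAt

lemma fderiv_grad {F : E → ℝ} (hF : ContDiff ℝ (⊤ : ℕ∞) F) (x : E) :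
    fderiv ℝ (gradient F) x = (dualSymmCLM E).comp (fderiv ℝ (fderiv ℝ F) x) :=
  (hasFDerivAt_grad hF x).fderiv

lemma inner_fderiv_grad {F : E → ℝ} (hF : ContDiff ℝ (⊤ : ℕ∞) F) (x v w : E) :
    ⟪fderiv ℝ (gradient F) x v, w⟫ = fderiv ℝ (fderiv ℝ F) x v w := by
  rw [fderiv_grad hF x]
  exact InnerProductSpace.toDual_symm_apply

/-- The Hessian of a smooth function is self-adjoint. -/
lemma hess_symm {F : E → ℝ} (hF : ContDiff ℝ (⊤ : ℕ∞) F) (x v w : E) :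
    ⟪fderiv ℝ (gradient F) x v, w⟫ = ⟪v, fderiv ℝ (gradient F) x w⟫ := by
  rw [inner_fderiv_grad hF, real_inner_comm, inner_fderiv_grad hF]
  exact second_derivative_symmetric
    (fun y => ((hF.differentiable (by simp)) y).hasFDerivAt)
    (((hF.fderiv_right (m := 1) (WithTop.coe_le_coe.mpr le_top)).differentiable one_ne_zero x).hasFDerivAt) v w

lemma pB_contDiff (σ : E →L[ℝ] E) {F G : E → ℝ}
    (hF : ContDiff ℝ (⊤ : ℕ∞) F) (hG : ContDiff ℝ (⊤ : ℕ∞) G) :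
    ContDiff ℝ (⊤ : ℕ∞) (poissonBracket σ F G) :=
  (grad_contDiff hF).inner ℝ (σ.contDiff.comp (grad_contDiff hG))

/-- The gradient of the Poisson bracket. -/
lemma grad_pB (σ : E →L[ℝ] E) (hσ : ∀ x y : E, ⟪σ x, y⟫ = -⟪x, σ y⟫)
    {F G : E → ℝ} (hF : ContDiff ℝ (⊤ : ℕ∞) F) (hG : ContDiff ℝ (⊤ : ℕ∞) G) (x : E) :
    gradient (poissonBracket σ F G) x =
      fderiv ℝ (gradient F) x (σ (gradient G x))
        - fderiv ℝ (gradient G) x (σ (gradient F x)) := by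
  set AF := fderiv ℝ (gradient F) x with hAF
  set AG := fderiv ℝ (gradient G) x with hAG
  have h1 : HasFDerivAt (gradient F) AF x := by
    rw [hAF, fderiv_grad hF]; exact hasFDerivAt_grad hF x
  have h2 : HasFDerivAt (fun y => σ (gradient G y)) (σ.comp AG) x := by
    refine σ.hasFDerivAt.comp x ?_
    rw [hAG, fderiv_grad hG]; exact hasFDerivAt_grad hG x
  have h3 := h1.inner ℝ h2
  have key : (fderivInnerCLM ℝ (gradient F x, σ (gradient G x))).comp (AF.prod (σ.comp AG))
      = InnerProductSpace.toDual ℝ E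
          (AF (σ (gradient G x)) - AG (σ (gradient F x))) := by
    ext v
    have e1 : ⟪gradient F x, σ (AG v)⟫ = -⟪AG (σ (gradient F x)), v⟫ := by
      have := hσ (gradient F x) (AG v)
      have h' : ⟪gradient F x, σ (AG v)⟫ = -⟪σ (gradient F x), AG v⟫ := by linarith
      rw [h', real_inner_comm, hess_symm hG, real_inner_comm]
    have e2 : ⟪AF v, σ (gradient G x)⟫ = ⟪AF (σ (gradient G x)), v⟫ := by
      rw [hess_symm hF, real_inner_comm]
    simp only [ContinuousLinearMap.comp_apply, ContinuousLinearMap.prod_apply,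
      fderivInnerCLM_apply, InnerProductSpace.toDual_apply_apply, inner_sub_left]
    linarith
  have h4 : HasGradientAt (poissonBracket σ F G)
      (AF (σ (gradient G x)) - AG (σ (gradient F x))) x := by
    rw [hasGradientAt_iff_hasFDerivAt, ← key]
    exact h3
  exact h4.gradient

end Aux

/-- The Poisson bracket of smooth functionals is smooth, antisymmetric,
and satisfies the Jacobi identity. -/
theorem poissonBracket_smooth_antisymm_jacobi
    {E : Type*} [NormedAddCommGroup E] [InnerProductSpace ℝ E] [CompleteSpace E]
    (σ : E →L[ℝ] E)
    (hσ : ∀ x y : E, ⟪σ x, y⟫ = -⟪x, σ y⟫)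
    (F G H : E → ℝ)
    (hF : ContDiff ℝ (⊤ : ℕ∞) F) (hG : ContDiff ℝ (⊤ : ℕ∞) G) (hH : ContDiff ℝ (⊤ : ℕ∞) H) :
    ContDiff ℝ (⊤ : ℕ∞) (poissonBracket σ F G) ∧
    (∀ x : E, poissonBracket σ F G x = - poissonBracket σ G F x) ∧
    (∀ x : E,
      poissonBracket σ (poissonBracket σ F G) H x
        + poissonBracket σ (poissonBracket σ G H) F x
        + poissonBracket σ (poissonBracket σ H F) G x = 0) := by
  refine ⟨pB_contDiff σ hF hG, ?_, ?_⟩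
  · intro x
    unfold poissonBracket
    rw [real_inner_comm, hσ]
  · intro x
    set f := gradient F x
    set g := gradient G x
    set h := gradient H x
    set AF := fderiv ℝ (gradient F) x
    set AG := fderiv ℝ (gradient G) x
    set AH := fderiv ℝ (gradient H) x
    have expand : ∀ (P Q R : E → ℝ), ContDiff ℝ (⊤ : ℕ∞) P → ContDiff ℝ (⊤ : ℕ∞) Q →
        poissonBracket σ (poissonBracket σ P Q) R x =
          ⟪fderiv ℝ (gradient P) x (σ (gradient Q x)), σ (gradient R x)⟫
            - ⟪fderiv ℝ (gradient Q) x (σ (gradient P x)), σ (gradient R x)⟫ := by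
      intro P Q R hP hQ
      show ⟪gradient (poissonBracket σ P Q) x, σ (gradient R x)⟫ = _
      rw [grad_pB σ hσ hP hQ x, inner_sub_left]
    have symmT : ∀ (P : E → ℝ), ContDiff ℝ (⊤ : ℕ∞) P → ∀ a b : E,
        ⟪fderiv ℝ (gradient P) x a, b⟫ = ⟪fderiv ℝ (gradient P) x b, a⟫ := by
      intro P hP a b
      rw [hess_symm hP, real_inner_comm]
    rw [expand F G H hF hG, expand G H F hG hH, expand H F G hH hF]
    have s1 := symmT F hF (σ g) (σ h)
    have s2 := symmT G hG (σ h) (σ f)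
    have s3 := symmT H hH (σ f) (σ g)
    linarith
end

section
/- Let F, G : E → ℝ be of class C². Then for every x ∈ E, the Hamiltonian vector field of the Poisson bracket {F, G} equals minus the commutator of the Hamiltonian vector fields of F and G; explicitly, σ (gradient {F, G} x) = (D X_F)_x (X_G(x)) - (D X_G)_x (X_F(x)), where (D X_F)_x denotes the Fréchet derivative at x of the map X_F : E → E. (This is the paper's Corollary that the map sending a differentiable generator to its Hamiltonian vector field is a homomorphism of Lie algebras, via the displayed identity {F,G}^A = -[F,G]^A.) -/
open RealInnerProductSpace

/-- The Hamiltonian vector field of a functional `F` : `X_F (x) = σ (gradient F x)`. -/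
noncomputable def hamVF {E : Type*} [NormedAddCommGroup E]
    [InnerProductSpace ℝ E] [CompleteSpace E]
    (σ : E →L[ℝ] E) (F : E → ℝ) : E → E :=
  fun x => σ (gradient F x)

/-!
The product rule gives `D{F, G}_x y = ⟪D(∇F)_x y, σ ∇G x⟫ + ⟪∇F x, σ D(∇G)_x y⟫`.
Both Hessians `D(∇F)_x`, `D(∇G)_x` are self-adjoint (Schwarz) and `σ` is skew-adjoint, so this is
`⟪D(∇F)_x (X_G x) - D(∇G)_x (X_F x), y⟫`, i.e. `∇{F, G} x = D(∇F)_x (X_G x) - D(∇G)_x (X_F x)`.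
Applying `σ`, which commutes with differentiation, `D(X_F)_x = σ ∘ D(∇F)_x`, gives the claim.
-/

section HamiltonianCalculus

variable {E : Type*} [NormedAddCommGroup E] [InnerProductSpace ℝ E] [CompleteSpace E]
  (σ : E →L[ℝ] E) {F G : E → ℝ} {x : E}

theorem ContDiffAt.differentiableAt_gradient (hF : ContDiffAt ℝ 2 F x) :
    DifferentiableAt ℝ (gradient F) x :=
  (InnerProductSpace.toDual ℝ E).symm.differentiableAt.comp x
    ((hF.fderiv_right (m := 1) (by norm_num)).differentiableAt one_ne_zero)

theorem inner_fderiv_gradient_apply (y z : E) :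
    ⟪fderiv ℝ (gradient F) x y, z⟫ = fderiv ℝ (fderiv ℝ F) x y z := by
  rw [show gradient F = (InnerProductSpace.toDual ℝ E).symm ∘ fderiv ℝ F from rfl,
    LinearIsometryEquiv.comp_fderiv]
  exact InnerProductSpace.toDual_symm_apply

theorem ContDiffAt.inner_fderiv_gradient_comm (hF : ContDiffAt ℝ 2 F x) (y z : E) :
    ⟪fderiv ℝ (gradient F) x y, z⟫ = ⟪fderiv ℝ (gradient F) x z, y⟫ := by
  rw [inner_fderiv_gradient_apply, inner_fderiv_gradient_apply]
  exact hF.isSymmSndFDerivAt (by simp [minSmoothness_of_isRCLikeNormedField]) y z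

theorem hasFDerivAt_hamVF (hF : DifferentiableAt ℝ (gradient F) x) :
    HasFDerivAt (hamVF σ F) (σ.comp (fderiv ℝ (gradient F) x)) x :=
  σ.hasFDerivAt.comp x hF.hasFDerivAt

theorem fderiv_poissonBracket_apply (hF : DifferentiableAt ℝ (gradient F) x)
    (hG : DifferentiableAt ℝ (gradient G) x) (y : E) :
    fderiv ℝ (poissonBracket σ F G) x y =
      ⟪fderiv ℝ (gradient F) x y, σ (gradient G x)⟫ +
        ⟪gradient F x, σ (fderiv ℝ (gradient G) x y)⟫ := by
  have h := fderiv_inner_apply ℝ hF (hasFDerivAt_hamVF σ hG).differentiableAt y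
  rw [(hasFDerivAt_hamVF σ hG).fderiv, add_comm] at h
  exact h

theorem gradient_poissonBracket (hσ : ∀ x y : E, ⟪σ x, y⟫ = -⟪x, σ y⟫)
    (hF : ContDiffAt ℝ 2 F x) (hG : ContDiffAt ℝ 2 G x) :
    gradient (poissonBracket σ F G) x =
      fderiv ℝ (gradient F) x (hamVF σ G x) - fderiv ℝ (gradient G) x (hamVF σ F x) := by
  refine ext_inner_right ℝ fun y => ?_
  calc ⟪gradient (poissonBracket σ F G) x, y⟫
      = ⟪fderiv ℝ (gradient F) x y, σ (gradient G x)⟫ +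
          ⟪gradient F x, σ (fderiv ℝ (gradient G) x y)⟫ := by
        rw [inner_gradient_left, fderiv_poissonBracket_apply σ hF.differentiableAt_gradient
          hG.differentiableAt_gradient]
    _ = ⟪fderiv ℝ (gradient F) x (hamVF σ G x), y⟫ -
          ⟪fderiv ℝ (gradient G) x (hamVF σ F x), y⟫ := by
        rw [hF.inner_fderiv_gradient_comm, ← neg_neg ⟪gradient F x, _⟫, ← hσ,
          ← real_inner_comm (σ _), hG.inner_fderiv_gradient_comm, sub_eq_add_neg]
        rfl
    _ = _ := (inner_sub_left _ _ _).symm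

end HamiltonianCalculus

/-- The Hamiltonian vector field of the Poisson bracket `{F, G}` is minus the
commutator of the Hamiltonian vector fields of `F` and `G`. -/
theorem hamVF_poissonBracket_eq_neg_commutator
    {E : Type*} [NormedAddCommGroup E] [InnerProductSpace ℝ E] [CompleteSpace E]
    (σ : E →L[ℝ] E)
    (hσ : ∀ x y : E, ⟪σ x, y⟫ = -⟪x, σ y⟫)
    (F G : E → ℝ) (hF : ContDiff ℝ 2 F) (hG : ContDiff ℝ 2 G) :
    ∀ x : E,
      σ (gradient (poissonBracket σ F G) x)
        = fderiv ℝ (hamVF σ F) x (hamVF σ G x) - fderiv ℝ (hamVF σ G) x (hamVF σ F x) := by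
  intro x
  rw [gradient_poissonBracket σ hσ hF.contDiffAt hG.contDiffAt, map_sub,
    (hasFDerivAt_hamVF σ hF.contDiffAt.differentiableAt_gradient).fderiv,
    (hasFDerivAt_hamVF σ hG.contDiffAt.differentiableAt_gradient).fderiv]
  rfl
end

section
/- Let H : E → ℝ be differentiable and let G : ℝ × E → ℝ be Fréchet differentiable. Write ∂_t G(t,x) for the derivative of s ↦ G(s,x) at t and ∇_x G(t,x) for the Riesz gradient of y ↦ G(t,y) at x. Assume the conservation condition ∂_t G(t,x) + ⟪∇_x G(t,x), σ (gradient H x)⟫ = 0 for all t ∈ ℝ and x ∈ E. Then for every curve z : ℝ → E such that z has derivative σ (gradient H (z t)) at every t (an integral curve of the Hamiltonian vector field of H), the function t ↦ G(t, z t) is constant on ℝ. (This is the conservation law dG/dt = ∂G/∂t + {G, H} = 0 satisfied by the generators of symmetries in the paper's Noether theorems.) -/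
open RealInnerProductSpace

section PartialDerivatives

variable {E F : Type*} [NormedAddCommGroup E] [NormedSpace ℝ E]
  [NormedAddCommGroup F] [NormedSpace ℝ F]

theorem HasFDerivAt.hasDerivAt_partial_fst {G : ℝ × E → F} {G' : ℝ × E →L[ℝ] F} {t : ℝ} {x : E}
    (hG : HasFDerivAt G G' (t, x)) : HasDerivAt (fun s => G (s, x)) (G' (1, 0)) t :=
  hG.comp_hasDerivAt t ((hasDerivAt_id t).prodMk (hasDerivAt_const t x))

theorem HasFDerivAt.hasFDerivAt_partial_snd {G : ℝ × E → F} {G' : ℝ × E →L[ℝ] F} {t : ℝ} {x : E}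
    (hG : HasFDerivAt G G' (t, x)) :
    HasFDerivAt (fun y => G (t, y)) (G'.comp (ContinuousLinearMap.inr ℝ ℝ E)) x :=
  hG.comp x (hasFDerivAt_prodMk_right t x)

theorem DifferentiableAt.hasDerivAt_comp_graph {G : ℝ × E → F} {z : ℝ → E} {v : E} {t : ℝ}
    (hG : DifferentiableAt ℝ G (t, z t)) (hz : HasDerivAt z v t) :
    HasDerivAt (fun r => G (r, z r))
      (deriv (fun s => G (s, z t)) t + fderiv ℝ (fun y => G (t, y)) (z t) v) t := by
  have hG' := hG.hasFDerivAt
  have hsplit : ((1 : ℝ), v) = ((1 : ℝ), (0 : E)) + ((0 : ℝ), v) := by simp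
  rw [hG'.hasDerivAt_partial_fst.deriv, hG'.hasFDerivAt_partial_snd.fderiv,
    ContinuousLinearMap.comp_apply, ContinuousLinearMap.inr_apply, ← map_add, ← hsplit]
  exact hG'.comp_hasDerivAt t ((hasDerivAt_id t).prodMk hz)

end PartialDerivatives

theorem conserved_generator_constant_along_flow_general
    {E : Type*} [NormedAddCommGroup E] [InnerProductSpace ℝ E] [CompleteSpace E]
    (σ : E →L[ℝ] E)
    (H : E → ℝ)
    (G : ℝ × E → ℝ) (hGdiff : Differentiable ℝ G)
    (hcons : ∀ (t : ℝ) (x : E),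
      deriv (fun s => G (s, x)) t
        + ⟪gradient (fun y => G (t, y)) x, σ (gradient H x)⟫ = 0) :
    ∀ z : ℝ → E, (∀ t : ℝ, HasDerivAt z (σ (gradient H (z t))) t) →
      ∀ s t : ℝ, G (s, z s) = G (t, z t) := by
  intro z hz
  have hflat : ∀ u, HasDerivAt (fun r => G (r, z r)) 0 u := fun u => by
    simpa only [← inner_gradient_left, hcons] using (hGdiff _).hasDerivAt_comp_graph (hz u)
  exact is_const_of_deriv_eq_zero (fun u => (hflat u).differentiableAt) fun u => (hflat u).deriv

/-- A (possibly time-dependent) generator `G` satisfying the conservation condition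
`∂G/∂t + {G, H} = 0` is constant along every integral curve of the Hamiltonian
vector field of `H`. -/
theorem conserved_generator_constant_along_flow
    {E : Type*} [NormedAddCommGroup E] [InnerProductSpace ℝ E] [CompleteSpace E]
    (σ : E →L[ℝ] E)
    (hσ : ∀ x y : E, ⟪σ x, y⟫ = -⟪x, σ y⟫)
    (H : E → ℝ) (hH : Differentiable ℝ H)
    (G : ℝ × E → ℝ) (hGdiff : Differentiable ℝ G)
    (hcons : ∀ (t : ℝ) (x : E),
      deriv (fun s => G (s, x)) t
        + ⟪gradient (fun y => G (t, y)) x, σ (gradient H x)⟫ = 0) :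
    ∀ z : ℝ → E, (∀ t : ℝ, HasDerivAt z (σ (gradient H (z t))) t) →
      ∀ s t : ℝ, G (s, z s) = G (t, z t) :=
  conserved_generator_constant_along_flow_general σ H G hGdiff hcons
end

section
/- Let H : E → ℝ and k : E → ℝ be differentiable and let Q : E → E be differentiable, and assume the invariance condition: for all x, v ∈ E, (1/2)⟪Q x, ω v⟫ + (1/2)⟪x, ω ((DQ)_x v)⟫ - ⟪gradient H x, Q x⟫ = ⟪gradient k x, v⟫, where (DQ)_x is the Fréchet derivative of Q at x. Define G : E → ℝ by G(x) = (1/2)⟪x, ω (Q x)⟫ - k(x). Then: (a) for every x ∈ E, ω (Q x) = gradient G x, i.e. Q is the Hamiltonian vector field generated by G; and (b) for every x ∈ E, ⟪gradient H x, Q x⟫ = 0, i.e. G Poisson-commutes with H and hence is a conserved quantity. (This is the paper's first Noether theorem: a variation preserving the boundary conditions and preserving the Hamiltonian action up to a total time derivative is generated by a differentiable conserved generator G, here in the time-independent, Hilbert-space form.) -/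
/-!
Differentiating `G x = (1/2)⟪x, ω (Q x)⟫ - k x` in a direction `v` gives
`(1/2)⟪v, ω (Q x)⟫ + (1/2)⟪x, ω (DQ_x v)⟫ - ⟪∇k x, v⟫`. The invariance condition at `v = 0`
says `⟪∇H x, Q x⟫ = 0`; with that term gone it replaces `⟪∇k x, v⟫`, and skew-adjointness of `ω`
turns what remains into `⟪ω (Q x), v⟫`.
-/

open RealInnerProductSpace

section

variable {E : Type*} [NormedAddCommGroup E] [InnerProductSpace ℝ E]

theorem HasFDerivAt.inner_self_apply {A : E →L[ℝ] E} {Q : E → E} {Q' : E →L[ℝ] E} {x : E}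
    (hQ : HasFDerivAt Q Q' x) :
    HasFDerivAt (fun y => ⟪y, A (Q y)⟫)
      ((innerSL ℝ x).comp (A.comp Q') + innerSL ℝ (A (Q x))) x := by
  refine ((hasFDerivAt_id x).inner ℝ (A.hasFDerivAt.comp x hQ)).congr_fderiv ?_
  ext v
  simp [real_inner_comm]

theorem hasGradientAt_half_inner_apply_sub [CompleteSpace E] {ω : E →L[ℝ] E}
    (hω : ∀ x y : E, ⟪ω x, y⟫ = -⟪x, ω y⟫) {k : E → ℝ} {Q : E → E} {x : E}
    (hk : DifferentiableAt ℝ k x) (hQ : DifferentiableAt ℝ Q x)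
    (hinv : ∀ v : E,
      (1 / 2 : ℝ) * ⟪Q x, ω v⟫ + (1 / 2 : ℝ) * ⟪x, ω (fderiv ℝ Q x v)⟫ = ⟪gradient k x, v⟫) :
    HasGradientAt (fun y => (1 / 2 : ℝ) * ⟪y, ω (Q y)⟫ - k y) (ω (Q x)) x := by
  rw [hasGradientAt_iff_hasFDerivAt]
  refine ((hQ.hasFDerivAt.inner_self_apply (A := ω)).const_mul (1 / 2 : ℝ)
    |>.sub hk.hasGradientAt.hasFDerivAt).congr_fderiv ?_
  ext v
  simp only [sub_apply, smul_apply, add_apply, ContinuousLinearMap.comp_apply, innerSL_apply_apply,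
    InnerProductSpace.toDual_apply_apply, smul_eq_mul]
  linarith [hinv v, hω (Q x) v]

end

theorem noether_variation_has_conserved_generator_general
    {E : Type*} [NormedAddCommGroup E] [InnerProductSpace ℝ E] [CompleteSpace E]
    (ω : E ≃L[ℝ] E)
    (hω : ∀ x y : E, ⟪ω x, y⟫ = -⟪x, ω y⟫)
    (H k : E → ℝ) (hk : Differentiable ℝ k)
    (Q : E → E) (hQ : Differentiable ℝ Q)
    (hinv : ∀ x v : E,
      (1 / 2 : ℝ) * ⟪Q x, ω v⟫ + (1 / 2 : ℝ) * ⟪x, ω (fderiv ℝ Q x v)⟫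
        - ⟪gradient H x, Q x⟫ = ⟪gradient k x, v⟫) :
    (∀ x : E, ω (Q x) = gradient (fun y => (1 / 2 : ℝ) * ⟪y, ω (Q y)⟫ - k y) x) ∧
    (∀ x : E, ⟪gradient H x, Q x⟫ = 0) := by
  have hconserved : ∀ x, ⟪gradient H x, Q x⟫ = 0 := fun x => by simpa using hinv x 0
  refine ⟨fun x => ?_, hconserved⟩
  have hG := hasGradientAt_half_inner_apply_sub (ω := (ω : E →L[ℝ] E)) hω (hk x) (hQ x)
    fun v => by simpa [hconserved x] using hinv x v
  exact hG.gradient.symm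

/-- Noether's theorem, hamiltonian form (time-independent, Hilbert-space version):
a variation `Q` preserving the Hamiltonian action up to a total time derivative `k`
is the Hamiltonian vector field of the generator `G(x) = (1/2)⟪x, ω (Q x)⟫ - k(x)`,
and this generator Poisson-commutes with the Hamiltonian `H`. -/
theorem noether_variation_has_conserved_generator
    {E : Type*} [NormedAddCommGroup E] [InnerProductSpace ℝ E] [CompleteSpace E]
    (ω : E ≃L[ℝ] E)
    (hω : ∀ x y : E, ⟪ω x, y⟫ = -⟪x, ω y⟫)
    (H k : E → ℝ) (hH : Differentiable ℝ H) (hk : Differentiable ℝ k)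
    (Q : E → E) (hQ : Differentiable ℝ Q)
    (hinv : ∀ x v : E,
      (1 / 2 : ℝ) * ⟪Q x, ω v⟫ + (1 / 2 : ℝ) * ⟪x, ω (fderiv ℝ Q x v)⟫
        - ⟪gradient H x, Q x⟫ = ⟪gradient k x, v⟫) :
    (∀ x : E, ω (Q x) = gradient (fun y => (1 / 2 : ℝ) * ⟪y, ω (Q y)⟫ - k y) x) ∧
    (∀ x : E, ⟪gradient H x, Q x⟫ = 0) :=
  noether_variation_has_conserved_generator_general ω hω H k hk Q hQ hinv
end

section
/- Let H : E → ℝ be differentiable and let G : E → ℝ be differentiable with differentiable gradient map x ↦ gradient G x. Assume that G Poisson-commutes with H: ⟪gradient H x, ω⁻¹ (gradient G x)⟫ = 0 for all x ∈ E. Define Q : E → E by Q(x) = ω⁻¹ (gradient G x) and k : E → ℝ by k(x) = (1/2)⟪x, gradient G x⟫ - G(x). Then the invariance condition holds: for all x, v ∈ E, (1/2)⟪Q x, ω v⟫ + (1/2)⟪x, ω ((DQ)_x v)⟫ - ⟪gradient H x, Q x⟫ = ⟪gradient k x, v⟫, where (DQ)_x is the Fréchet derivative of Q at x. (This is the paper's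 Theorem: if G is a differentiable functional with ∂G/∂t + {G, H} = 0, then the variation generated by G preserves the Hamiltonian action up to a total time derivative; here in the time-independent, Hilbert-space form.) -/
open RealInnerProductSpace

/-! With `g = ∇G`, the derivative of `k` at `x` in direction `v` is `½⟪x, Dg_x v⟫ - ½⟪g x, v⟫`.
On the left, skew-adjointness turns `½⟪ω⁻¹ g x, ω v⟫` into `-½⟪g x, v⟫`, linearity of `ω⁻¹`
turns the second term into `½⟪x, Dg_x v⟫`, and the Hamiltonian term is the Poisson bracket
`{G, H}`, which vanishes. -/

section Skew

variable {E : Type*} [NormedAddCommGroup E] [InnerProductSpace ℝ E]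

theorem inner_symm_apply_apply_of_skew (ω : E ≃L[ℝ] E)
    (hω : ∀ x y : E, ⟪ω x, y⟫ = -⟪x, ω y⟫) (u v : E) :
    ⟪ω.symm u, ω v⟫ = -⟪u, v⟫ := by
  simpa using (congrArg Neg.neg (hω (ω.symm u) v)).symm

end Skew

section Gradient

variable {E : Type*} [NormedAddCommGroup E] [InnerProductSpace ℝ E] [CompleteSpace E]

theorem inner_gradient_half_inner_gradient_sub {G : E → ℝ} {x : E}
    (hG : DifferentiableAt ℝ G x) (hgradG : DifferentiableAt ℝ (gradient G) x) (v : E) :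
    ⟪gradient (fun y => (1 / 2 : ℝ) * ⟪y, gradient G y⟫ - G y) x, v⟫
      = (1 / 2 : ℝ) * ⟪x, fderiv ℝ (gradient G) x v⟫ - (1 / 2 : ℝ) * ⟪gradient G x, v⟫ := by
  have hinner : DifferentiableAt ℝ (fun y => ⟪y, gradient G y⟫) x :=
    differentiableAt_fun_id.inner ℝ hgradG
  rw [inner_gradient_left, fderiv_fun_sub (hinner.const_mul _) hG, sub_apply,
    fderiv_const_mul hinner, smul_apply, smul_eq_mul,
    fderiv_inner_apply ℝ differentiableAt_fun_id hgradG, fderiv_fun_id,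
    ContinuousLinearMap.id_apply, ← inner_gradient_left, real_inner_comm v]
  ring

end Gradient

theorem conserved_generator_gives_symmetry_general
    {E : Type*} [NormedAddCommGroup E] [InnerProductSpace ℝ E] [CompleteSpace E]
    (ω : E ≃L[ℝ] E)
    (hω : ∀ x y : E, ⟪ω x, y⟫ = -⟪x, ω y⟫)
    (H G : E → ℝ) (hG : Differentiable ℝ G)
    (hgradG : Differentiable ℝ (fun x => gradient G x))
    (hcomm : ∀ x : E, ⟪gradient H x, ω.symm (gradient G x)⟫ = 0) :
    ∀ x v : E,
      (1 / 2 : ℝ) * ⟪ω.symm (gradient G x), ω v⟫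
        + (1 / 2 : ℝ) * ⟪x, ω (fderiv ℝ (fun y => ω.symm (gradient G y)) x v)⟫
        - ⟪gradient H x, ω.symm (gradient G x)⟫
      = ⟪gradient (fun y => (1 / 2 : ℝ) * ⟪y, gradient G y⟫ - G y) x, v⟫ := by
  intro x v
  have hQ : ω (fderiv ℝ (fun y => ω.symm (gradient G y)) x v) = fderiv ℝ (gradient G) x v := by
    change ω (fderiv ℝ (ω.symm ∘ gradient G) x v) = _
    simp [ω.symm.comp_fderiv]
  rw [inner_gradient_half_inner_gradient_sub (hG x) (hgradG x),
    inner_symm_apply_apply_of_skew ω hω, hQ, hcomm x]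
  ring

/-- Converse Noether theorem, hamiltonian form (time-independent, Hilbert-space version):
if `G` Poisson-commutes with `H`, then the variation generated by `G`, i.e.
`Q(x) = ω⁻¹(gradient G x)`, preserves the Hamiltonian action up to the total time
derivative of `k(x) = (1/2)⟪x, gradient G x⟫ - G(x)`. -/
theorem conserved_generator_gives_symmetry
    {E : Type*} [NormedAddCommGroup E] [InnerProductSpace ℝ E] [CompleteSpace E]
    (ω : E ≃L[ℝ] E)
    (hω : ∀ x y : E, ⟪ω x, y⟫ = -⟪x, ω y⟫)
    (H G : E → ℝ) (hH : Differentiable ℝ H) (hG : Differentiable ℝ G)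
    (hgradG : Differentiable ℝ (fun x => gradient G x))
    (hcomm : ∀ x : E, ⟪gradient H x, ω.symm (gradient G x)⟫ = 0) :
    ∀ x v : E,
      (1 / 2 : ℝ) * ⟪ω.symm (gradient G x), ω v⟫
        + (1 / 2 : ℝ) * ⟪x, ω (fderiv ℝ (fun y => ω.symm (gradient G y)) x v)⟫
        - ⟪gradient H x, ω.symm (gradient G x)⟫
      = ⟪gradient (fun y => (1 / 2 : ℝ) * ⟪y, gradient G y⟫ - G y) x, v⟫ :=
  conserved_generator_gives_symmetry_general ω hω H G hG hgradG hcomm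
end
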